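/- Let O ∈ OT^Δ and M ∈ ST^Δ. Then the product O·M lies in ST^Δ if and only if O = 1. -/

import Mathlib

open Matrix

def UnipLT {n : ℕ} {K : Type*} [Field K] (M : Matrix (Fin n) (Fin n) K) : Prop :=
  (∀ i, M i i = 1) ∧ ∀ i j : Fin n, i < j → M i j = 0

noncomputable def phiD {n : ℕ} {K : Type*} [Field K]
    (Δ M : Matrix (Fin n) (Fin n) K) : Matrix (Fin n) (Fin n) K :=
  Δ * Mᵀ * Δ⁻¹

/-
The map `φ_Δ` is an anti-automorphism, so for `M` symmetric and `O` orthogonal a symmetric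
product `O * M` satisfies `O * M = φ_Δ (O * M) = M * O⁻¹`, whence `(O * M) ^ 2 = M ^ 2`.
In characteristic zero a unipotent lower-triangular matrix is determined by its square:
below the diagonal, `(A * A) i j = 2 * A i j + ∑_{j < k < i} A i k * A k j`, so the entries of
`A` can be recovered from those of `A * A` by induction on `i - j`. Hence `O * M = M` and `O = 1`.
-/

section UnipLT

variable {n : ℕ} {K : Type*} [Field K] {A B : Matrix (Fin n) (Fin n) K}

theorem phiD_mul {Δ : Matrix (Fin n) (Fin n) K} (hΔ : IsUnit Δ.det) :
    phiD Δ (A * B) = phiD Δ B * phiD Δ A := by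
  simp only [phiD, transpose_mul, Matrix.mul_assoc, ← Matrix.mul_assoc Δ⁻¹ Δ,
    nonsing_inv_mul Δ hΔ, Matrix.one_mul]

theorem UnipLT.isLowerTriangular (hA : UnipLT A) : A.IsLowerTriangular :=
  fun i j hij => hA.2 i j hij

theorem UnipLT.isUnit (hA : UnipLT A) : IsUnit A := by
  rw [isUnit_iff_isUnit_det, det_of_isLowerTriangular A hA.isLowerTriangular]
  simp [hA.1]

theorem UnipLT.apply_eq_one_apply_of_le (hA : UnipLT A) {i j : Fin n} (hij : i ≤ j) :
    A i j = (1 : Matrix (Fin n) (Fin n) K) i j := by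
  rcases hij.lt_or_eq with hij | rfl
  · rw [hA.2 i j hij, one_apply_ne hij.ne]
  · rw [hA.1, one_apply_eq]

theorem UnipLT.mul_self_apply_of_lt (hA : UnipLT A) {i j : Fin n} (hji : j < i) :
    (A * A) i j = 2 * A i j + ∑ k ∈ Finset.Ioo j i, A i k * A k j := by
  have hvanish : ∀ k ∈ Finset.univ, k ∉ Finset.Icc j i → A i k * A k j = 0 := by
    intro k _ hk
    rcases not_and_or.mp (Finset.mem_Icc.not.mp hk) with hk | hk
    · rw [hA.2 k j (not_le.mp hk), mul_zero]
    · rw [hA.2 i k (not_le.mp hk), zero_mul]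
  rw [mul_apply, ← Finset.sum_subset (Finset.subset_univ _) hvanish,
    Finset.Icc_eq_cons_Ioc hji.le, Finset.sum_cons, Finset.Ioc_eq_cons_Ioo hji, Finset.sum_cons,
    hA.1, hA.1]
  ring

theorem UnipLT.eq_of_mul_self_eq [NeZero (2 : K)] (hA : UnipLT A) (hB : UnipLT B)
    (h : A * A = B * B) : A = B := by
  suffices key : ∀ d : ℕ, ∀ i j : Fin n, (i : ℕ) - j = d → A i j = B i j from
    Matrix.ext fun i j => key _ i j rfl
  intro d
  induction d using Nat.strong_induction_on with
  | _ d ih =>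
    intro i j hd
    rcases le_or_gt i j with hij | hji
    · rw [hA.apply_eq_one_apply_of_le hij, hB.apply_eq_one_apply_of_le hij]
    have hsum :
        ∑ k ∈ Finset.Ioo j i, A i k * A k j = ∑ k ∈ Finset.Ioo j i, B i k * B k j := by
      refine Finset.sum_congr rfl fun k hk => ?_
      obtain ⟨hjk, hki⟩ := Finset.mem_Ioo.mp hk
      have hjk : (j : ℕ) < k := hjk
      have hki : (k : ℕ) < i := hki
      rw [ih _ (by omega) i k rfl, ih _ (by omega) k j rfl]
    have h2 := congr_fun₂ h i j
    rw [hA.mul_self_apply_of_lt hji, hB.mul_self_apply_of_lt hji, hsum, add_left_inj] at h2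
    exact mul_left_cancel₀ two_ne_zero h2

end UnipLT

theorem OTD_mul_STD_mem_STD_iff_general {n : ℕ} {K : Type*} [Field K] [CharZero K]
    (Δ : Matrix (Fin n) (Fin n) K) (hdet : IsUnit Δ.det)
    (O M : Matrix (Fin n) (Fin n) K)
    (hO : UnipLT O) (hOorth : phiD Δ O = O⁻¹)
    (hM : UnipLT M) (hMsym : phiD Δ M = M) :
    (UnipLT (O * M) ∧ phiD Δ (O * M) = O * M) ↔ O = 1 := by
  constructor
  · rintro ⟨hOM, hOMsym⟩
    have hswap : O * M = M * O⁻¹ := by rw [← hOMsym, phiD_mul hdet, hMsym, hOorth]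
    have hsq : (O * M) * (O * M) = M * M :=
      calc (O * M) * (O * M) = (M * O⁻¹) * (O * M) := congrArg (· * (O * M)) hswap
        _ = M * (O⁻¹ * O) * M := by simp only [Matrix.mul_assoc]
        _ = M * M := by
          rw [nonsing_inv_mul O ((isUnit_iff_isUnit_det O).mp hO.isUnit), Matrix.mul_one]
    exact hM.isUnit.mul_eq_right.mp (hOM.eq_of_mul_self_eq hM hsq)
  · rintro rfl
    rw [Matrix.one_mul]
    exact ⟨hM, hMsym⟩

/-- for O ∈ OT^Δ and M ∈ ST^Δ, O·M ∈ ST^Δ iff O = 1. -/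
theorem OTD_mul_STD_mem_STD_iff {n : ℕ} {K : Type*} [Field K] [CharZero K]
    (Δ : Matrix (Fin n) (Fin n) K) (hdet : IsUnit Δ.det)
    (hsym : Δᵀ = Δ ∨ Δᵀ = -Δ)
    (O M : Matrix (Fin n) (Fin n) K)
    (hO : UnipLT O) (hOorth : phiD Δ O = O⁻¹)
    (hM : UnipLT M) (hMsym : phiD Δ M = M) :
    (UnipLT (O * M) ∧ phiD Δ (O * M) = O * M) ↔ O = 1 :=
  OTD_mul_STD_mem_STD_iff_general Δ hdet O M hO hOorth hM hMsym
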